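/- arXiv:2408.16508 — 5 statements merged into one kernel-verified Lean document; each statement's English description precedes it below -/
import Mathlib

section
/- Given a node-colored graph G = (V,E,C) and any colorful connected component S of G, every optimal solution to the MEC problem has at most |V∖S| + 1 colorful components. -/
/-- A subgraph is *colorful* if within each of its connected components all
node colors are pairwise distinct. -/
def Colorful {V C : Type*} (G' : SimpleGraph V) (c : V → C) : Prop :=
  ∀ u v : V, G'.Reachable u v → c u = c v → u = v

/-- Number of edges of the transitive closure of `G'`: one edge for each
unordered pair of distinct mutually reachable nodes. -/
noncomputable def tcEdges {V : Type*} (G' : SimpleGraph V) : ℕ :=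
  Nat.card {p : V × V // p.1 ≠ p.2 ∧ G'.Reachable p.1 p.2} / 2

/-- An optimal solution of the MEC problem: a spanning subgraph of `G` all of
whose components are colorful, maximizing the number of edges of the
transitive closure. -/
def IsMECOptimal {V C : Type*} (G G' : SimpleGraph V) (c : V → C) : Prop :=
  G' ≤ G ∧ Colorful G' c ∧
    ∀ H : SimpleGraph V, H ≤ G → Colorful H c → tcEdges H ≤ tcEdges G'

/-!
Let `S` have `s` vertices and let the optimal solution `G'` have `N` components on `n` vertices.
Keeping exactly the edges of `G` inside `S` is a feasible solution whose transitive closure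
contains all `s.choose 2` pairs of `S`. On the other hand, among graphs with `N` components the
transitive closure is largest when all but one component are singletons, so it has at most
`(n - N + 1).choose 2` edges. Optimality gives `s.choose 2 ≤ (n - N + 1).choose 2`, hence
`s ≤ n - N + 1`.
-/

open Finset

theorem Nat.succ_choose_two (n : ℕ) : (n + 1).choose 2 = n.choose 2 + n := by
  rw [Nat.choose_succ_succ', Nat.choose_one_right, add_comm]

theorem Nat.two_mul_choose_two (n : ℕ) : 2 * n.choose 2 = n * n - n := by
  rw [Nat.choose_two_right, Nat.mul_div_cancel' (Nat.even_mul_pred_self n).two_dvd,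
    Nat.mul_sub_one]

theorem Nat.add_choose_two (a b : ℕ) : (a + b).choose 2 = a.choose 2 + b.choose 2 + a * b := by
  induction b with
  | zero => simp
  | succ b ih => rw [← add_assoc, Nat.succ_choose_two, Nat.succ_choose_two, ih]; ring

theorem Nat.le_of_choose_two_le {a b : ℕ} (hb : 1 ≤ b) (h : a.choose 2 ≤ b.choose 2) : a ≤ b := by
  by_contra! hba
  have := Nat.choose_le_choose 2 (Nat.succ_le_of_lt hba)
  rw [Nat.succ_choose_two] at this
  omega

theorem Finset.sum_succ_choose_two_le {ι : Type*} (s : Finset ι) (f : ι → ℕ) :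
    ∑ i ∈ s, (f i + 1).choose 2 ≤ (∑ i ∈ s, f i + 1).choose 2 := by
  classical
  induction s using Finset.induction_on with
  | empty => simp
  | insert i s hi ih =>
    rw [sum_insert hi, sum_insert hi, add_assoc, Nat.succ_choose_two (f i), Nat.add_choose_two]
    nlinarith [Nat.zero_le (f i * ∑ j ∈ s, f j)]

theorem Finset.card_filter_ne_and_apply_eq {α ι : Type*} [Fintype α] [DecidableEq α] [Fintype ι]
    [DecidableEq ι] (f : α → ι) :
    #{p : α × α | p.1 ≠ p.2 ∧ f p.1 = f p.2} = ∑ i, 2 * (#{a | f a = i}).choose 2 := by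
  rw [card_eq_sum_card_fiberwise (f := fun p => f p.1) (t := univ) fun _ _ => mem_univ _]
  refine sum_congr rfl fun i _ => ?_
  have hfiber : ({p ∈ {p : α × α | p.1 ≠ p.2 ∧ f p.1 = f p.2} | f p.1 = i} : Finset (α × α))
      = ({a | f a = i} : Finset α).offDiag := by
    ext ⟨a, b⟩
    simp only [mem_filter, mem_univ, true_and, mem_offDiag]
    grind
  rw [hfiber, offDiag_card, Nat.two_mul_choose_two]

namespace SimpleGraph

variable {V : Type*} (G : SimpleGraph V)

theorem sum_card_connectedComponent_supp [Fintype G.ConnectedComponent] [Finite V] :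
    ∑ K : G.ConnectedComponent, Nat.card K.supp = Nat.card V := by
  rw [← Nat.card_sigma]
  exact Nat.card_congr (Equiv.sigmaFiberEquiv G.connectedComponentMk)

theorem tcEdges_eq_sum_choose_two [Fintype V] [Fintype G.ConnectedComponent] :
    tcEdges G = ∑ K : G.ConnectedComponent, (Nat.card K.supp).choose 2 := by
  classical
  have hpairs : Nat.card {p : V × V // p.1 ≠ p.2 ∧ G.Reachable p.1 p.2}
      = #{p : V × V | p.1 ≠ p.2 ∧ G.connectedComponentMk p.1 = G.connectedComponentMk p.2} := by
    simp only [Nat.card_eq_fintype_card, Fintype.card_subtype, ConnectedComponent.eq]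
  rw [tcEdges, hpairs, card_filter_ne_and_apply_eq, ← mul_sum, Nat.mul_div_cancel_left _ two_pos]
  refine sum_congr rfl fun K _ => ?_
  rw [Nat.card_eq_card_toFinset]
  congr 2
  ext
  simp [ConnectedComponent.mem_supp_iff]

theorem choose_two_le_tcEdges [Finite V] {S : Set V} (hS : ∀ u ∈ S, ∀ v ∈ S, G.Reachable u v) :
    (Nat.card S).choose 2 ≤ tcEdges G := by
  classical
  cases nonempty_fintype V
  rcases S.eq_empty_or_nonempty with rfl | ⟨u, hu⟩
  · simp
  have hsub : S ⊆ (G.connectedComponentMk u).supp := fun v hv =>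
    ConnectedComponent.eq.2 (hS v hv u hu)
  rw [tcEdges_eq_sum_choose_two]
  calc (Nat.card S).choose 2
      ≤ (Nat.card (G.connectedComponentMk u).supp).choose 2 :=
        Nat.choose_le_choose 2 (Nat.card_mono (Set.toFinite _) hsub)
    _ ≤ _ := single_le_sum (f := fun K : G.ConnectedComponent => (Nat.card K.supp).choose 2)
          (fun K _ => Nat.zero_le _) (mem_univ _)

theorem tcEdges_le_choose_two [Finite V] :
    tcEdges G ≤ (Nat.card V - Nat.card G.ConnectedComponent + 1).choose 2 := by
  classical
  cases nonempty_fintype V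
  have hsucc (K : G.ConnectedComponent) : Nat.card K.supp - 1 + 1 = Nat.card K.supp :=
    Nat.sub_add_cancel (Nat.card_pos_iff.2 ⟨K.nonempty_supp.to_subtype, inferInstance⟩)
  have hsum : ∑ K : G.ConnectedComponent, (Nat.card K.supp - 1)
      = Nat.card V - Nat.card G.ConnectedComponent := by
    have := G.sum_card_connectedComponent_supp
    rw [← sum_congr rfl fun K _ => hsucc K, sum_add_distrib, sum_const, smul_eq_mul, mul_one,
      card_univ, ← Nat.card_eq_fintype_card] at this
    omega
  rw [tcEdges_eq_sum_choose_two, ← hsum]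
  calc ∑ K : G.ConnectedComponent, (Nat.card K.supp).choose 2
        = ∑ K : G.ConnectedComponent, (Nat.card K.supp - 1 + 1).choose 2 := by
        simp only [hsucc]
    _ ≤ _ := sum_succ_choose_two_le _ _

theorem colorful_of_support_subset {C : Type*} {c : V → C} {S : Set V} (hG : G.support ⊆ S)
    (hc : Set.InjOn c S) : Colorful G c := by
  intro u v huv hcuv
  by_contra hne
  exact hne <| hc (hG (mem_support_of_reachable hne huv))
    (hG (mem_support_of_reachable (Ne.symm hne) huv.symm)) hcuv

theorem reachable_spanningCoe_induce {S : Set V} (hS : (G.induce S).Preconnected) {u v : V}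
    (hu : u ∈ S) (hv : v ∈ S) : (G.induce S).spanningCoe.Reachable u v :=
  (hS ⟨u, hu⟩ ⟨v, hv⟩).map (Embedding.map _ _).toHom

end SimpleGraph

/-- Given any colorful connected component `S` of `G`, every optimal MEC
solution has at most `|V ∖ S| + 1` colorful components. -/
theorem stmt_4 {V C : Type*} [Fintype V] (G : SimpleGraph V) (c : V → C)
    (S : Set V) (hconn : (G.induce S).Connected) (hcolS : Set.InjOn c S)
    (G' : SimpleGraph V) (hopt : IsMECOptimal G G' c) :
    Nat.card G'.ConnectedComponent ≤ Nat.card (Sᶜ : Set V) + 1 := by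
  obtain ⟨-, -, hmax⟩ := hopt
  set H := (G.induce S).spanningCoe
  have hHcol : Colorful H c := H.colorful_of_support_subset
    (by rw [SimpleGraph.support_spanningCoe]; rintro _ ⟨v, -, rfl⟩; exact v.2) hcolS
  have hchoose : (Nat.card S).choose 2
      ≤ (Nat.card V - Nat.card G'.ConnectedComponent + 1).choose 2 :=
    calc (Nat.card S).choose 2
        ≤ tcEdges H := H.choose_two_le_tcEdges fun u hu v hv =>
          G.reachable_spanningCoe_induce hconn.preconnected hu hv
      _ ≤ tcEdges G' := hmax H (G.spanningCoe_induce_le S) hHcol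
      _ ≤ _ := G'.tcEdges_le_choose_two
  have hcardS := Nat.le_of_choose_two_le (Nat.le_add_left 1 _) hchoose
  have hN : Nat.card G'.ConnectedComponent ≤ Nat.card V :=
    Nat.card_le_card_of_surjective _ Quot.mk_surjective
  rw [Nat.card_coe_set_eq, Set.ncard_compl, ← Nat.card_coe_set_eq]
  omega
end

section
/- Given k ≥ 2 pairwise disjoint maximum-cardinality colorful components S₁,...,S_k of a node-colored graph G = (V,E,C), each of size n, every optimal solution to the MEC problem has at most |V ∖ (S₁ ∪ ... ∪ S_k)| + k colorful components. -/
/-! The union `H` of the induced subgraphs `G[Sᵢ]` is colorful, and at least `k · n(n-1)` ordered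
pairs of distinct nodes are reachable in it; by optimality (and parity) the same holds for `G'`.
Every component of `G'` is connected in `G` and colorful, hence has at most `n` nodes; a component
with `a ≤ n` nodes contributes `a(a-1) ≤ n(a-1)` such pairs, so `G'` with `m` components has at
most `n(|V| - m)` of them. Since `|V| = kn + |V ∖ ⋃ Sᵢ|`, comparing the two bounds gives
`m ≤ |V ∖ ⋃ Sᵢ| + k`. -/

open Function SimpleGraph

lemma Nat.card_subtype_fst_ne_snd (α : Type*) [Finite α] :
    Nat.card {p : α × α // p.1 ≠ p.2} = Nat.card α * (Nat.card α - 1) := by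
  classical
  cases nonempty_fintype α
  rw [Nat.card_eq_fintype_card, Nat.card_eq_fintype_card, Fintype.card_subtype,
    Nat.mul_sub_one, ← Finset.card_univ, ← Finset.offDiag_card]
  congr 1
  ext p
  simp

lemma Set.natCard_iUnion_of_pairwiseDisjoint {V ι : Type*} [Finite V] [Fintype ι]
    {S : ι → Set V} (hS : Pairwise (Disjoint on S)) :
    Nat.card (⋃ i, S i) = ∑ i, Nat.card (S i) := by
  rw [Nat.card_congr (Set.unionEqSigmaOfDisjoint hS), Nat.card_sigma]

namespace SimpleGraph

variable {V : Type*}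

abbrev ReachablePairs (G : SimpleGraph V) : Type _ :=
  {p : V × V // p.1 ≠ p.2 ∧ G.Reachable p.1 p.2}

lemma tcEdges_eq (G : SimpleGraph V) : tcEdges G = Nat.card G.ReachablePairs / 2 := rfl

lemma sum_card_supp [Finite V] {G : SimpleGraph V} [Fintype G.ConnectedComponent] :
    ∑ K : G.ConnectedComponent, Nat.card K.supp = Nat.card V := by
  rw [← Nat.card_congr (Equiv.sigmaFiberEquiv G.connectedComponentMk), Nat.card_sigma]
  rfl

lemma card_reachablePairs_le_sum [Finite V] {G : SimpleGraph V}
    [Fintype G.ConnectedComponent] :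
    Nat.card G.ReachablePairs ≤
      ∑ K : G.ConnectedComponent, Nat.card K.supp * (Nat.card K.supp - 1) := by
  let f : G.ReachablePairs →
      (K : G.ConnectedComponent) × {p : K.supp × K.supp // p.1 ≠ p.2} :=
    fun p => ⟨G.connectedComponentMk p.1.1,
      ⟨(⟨p.1.1, rfl⟩, ⟨p.1.2, ConnectedComponent.eq.mpr p.2.2.symm⟩),
        fun h => p.2.1 (congrArg Subtype.val h)⟩⟩
  have hf : Function.Injective f := fun p q hpq =>
    Subtype.ext (congrArg (fun x => ((x.2.1.1 : V), (x.2.1.2 : V))) hpq)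
  calc Nat.card G.ReachablePairs ≤ _ := Nat.card_le_card_of_injective f hf
    _ = _ := by simp only [Nat.card_sigma, Nat.card_subtype_fst_ne_snd]

lemma card_reachablePairs_add_mul_card_le [Finite V] {G : SimpleGraph V} {n : ℕ}
    (h : ∀ K : G.ConnectedComponent, Nat.card K.supp ≤ n) :
    Nat.card G.ReachablePairs + n * Nat.card G.ConnectedComponent ≤ n * Nat.card V := by
  have := Fintype.ofFinite G.ConnectedComponent
  have hK (K : G.ConnectedComponent) :
      Nat.card K.supp * (Nat.card K.supp - 1) + n ≤ n * Nat.card K.supp := by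
    have hpos : 0 < Nat.card K.supp :=
      Nat.card_pos_iff.mpr ⟨K.nonempty_supp.to_subtype, inferInstance⟩
    obtain ⟨a, ha⟩ := Nat.exists_eq_add_one.mpr hpos
    have hKn := h K
    rw [ha] at hKn ⊢
    rw [Nat.add_sub_cancel]
    nlinarith
  calc Nat.card G.ReachablePairs + n * Nat.card G.ConnectedComponent
      ≤ ∑ K : G.ConnectedComponent, (Nat.card K.supp * (Nat.card K.supp - 1) + n) := by
        rw [Finset.sum_add_distrib, Finset.sum_const, smul_eq_mul, Finset.card_univ,
          ← Nat.card_eq_fintype_card, mul_comm n]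
        exact Nat.add_le_add_right card_reachablePairs_le_sum _
    _ ≤ ∑ K : G.ConnectedComponent, n * Nat.card K.supp := Finset.sum_le_sum fun K _ => hK K
    _ = n * Nat.card V := by rw [← Finset.mul_sum, sum_card_supp]

lemma sum_card_mul_pred_le_card_reachablePairs [Finite V] {G : SimpleGraph V} {ι : Type*}
    [Fintype ι] {S : ι → Set V} (hS : Pairwise (Disjoint on S))
    (hreach : ∀ i, ∀ u ∈ S i, ∀ v ∈ S i, G.Reachable u v) :
    ∑ i, Nat.card (S i) * (Nat.card (S i) - 1) ≤ Nat.card G.ReachablePairs := by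
  let f : (i : ι) × {p : S i × S i // p.1 ≠ p.2} → G.ReachablePairs :=
    fun x => ⟨(x.2.1.1, x.2.1.2), Subtype.coe_injective.ne x.2.2,
      hreach x.1 _ x.2.1.1.2 _ x.2.1.2.2⟩
  have hf : Function.Injective f := by
    rintro ⟨i, ⟨⟨u, v⟩, huv⟩⟩ ⟨j, ⟨⟨u', v'⟩, huv'⟩⟩ heq
    simp only [f, Subtype.mk.injEq, Prod.mk.injEq] at heq
    obtain rfl : i = j := hS.eq (Set.not_disjoint_iff.mpr ⟨u, u.2, heq.1 ▸ u'.2⟩)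
    exact congrArg (Sigma.mk i) (Subtype.ext (Prod.ext (Subtype.ext heq.1) (Subtype.ext heq.2)))
  calc _ = _ := by simp only [Nat.card_sigma, Nat.card_subtype_fst_ne_snd]
    _ ≤ Nat.card G.ReachablePairs := Nat.card_le_card_of_injective f hf

lemma ConnectedComponent.connected_induce_supp_of_le {G G' : SimpleGraph V} (hle : G' ≤ G)
    (K : G'.ConnectedComponent) : (G.induce K.supp).Connected :=
  K.connected_toSimpleGraph.mono (comap_monotone _ hle)

lemma Colorful.injOn_supp {C : Type*} {G : SimpleGraph V} {c : V → C} (hc : Colorful G c)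
    (K : G.ConnectedComponent) : Set.InjOn c K.supp :=
  fun _ hu _ hv => hc _ _ (K.reachable_of_mem_supp hu hv)

def induceBlocks (G : SimpleGraph V) {ι : Type*} (S : ι → Set V) : SimpleGraph V where
  Adj u v := G.Adj u v ∧ ∃ i, u ∈ S i ∧ v ∈ S i
  symm := ⟨fun _ _ ⟨h, i, hu, hv⟩ => ⟨h.symm, i, hv, hu⟩⟩
  loopless := ⟨fun _ ⟨h, _⟩ => G.irrefl h⟩

section induceBlocks

variable {G : SimpleGraph V} {ι : Type*} {S : ι → Set V}

@[simp]
lemma induceBlocks_adj {u v : V} :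
    (G.induceBlocks S).Adj u v ↔ G.Adj u v ∧ ∃ i, u ∈ S i ∧ v ∈ S i := Iff.rfl

lemma induceBlocks_le : G.induceBlocks S ≤ G := fun _ _ h => (induceBlocks_adj.mp h).1

lemma Reachable.mem_of_induceBlocks (hS : Pairwise (Disjoint on S)) {i : ι} {u v : V}
    (h : (G.induceBlocks S).Reachable u v) (hu : u ∈ S i) : v ∈ S i := by
  obtain ⟨p⟩ := h
  induction p with
  | nil => exact hu
  | cons h _ ih =>
    obtain ⟨-, j, hj, hj'⟩ := induceBlocks_adj.mp h
    obtain rfl : i = j := hS.eq (Set.not_disjoint_iff.mpr ⟨_, hu, hj⟩)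
    exact ih hj'

lemma colorful_induceBlocks {C : Type*} {c : V → C} (hS : Pairwise (Disjoint on S))
    (hc : ∀ i, Set.InjOn c (S i)) : Colorful (G.induceBlocks S) c := by
  rintro u v ⟨p⟩ huv
  cases p with
  | nil => rfl
  | cons h p =>
    obtain ⟨-, i, hu, hw⟩ := induceBlocks_adj.mp h
    exact hc i hu (p.reachable.mem_of_induceBlocks hS hw) huv

lemma reachable_induceBlocks {i : ι} (hS : (G.induce (S i)).Preconnected) {u v : V}
    (hu : u ∈ S i) (hv : v ∈ S i) : (G.induceBlocks S).Reachable u v :=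
  (hS ⟨u, hu⟩ ⟨v, hv⟩).map
    ⟨Subtype.val, fun {a b} hab => induceBlocks_adj.mpr ⟨hab, i, a.2, b.2⟩⟩

end induceBlocks

end SimpleGraph

theorem stmt_5_general {V C : Type*} [Fintype V] (G : SimpleGraph V) (c : V → C)
    (k n : ℕ) (S : Fin k → Set V)
    (hconn : ∀ i, (G.induce (S i)).Connected)
    (hcol : ∀ i, Set.InjOn c (S i))
    (hcard : ∀ i, Nat.card (S i) = n)
    (hmax : ∀ T : Set V, (G.induce T).Connected → Set.InjOn c T →
      Nat.card T ≤ n)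
    (hdisj : ∀ i j, i ≠ j → Disjoint (S i) (S j))
    (G' : SimpleGraph V) (hopt : IsMECOptimal G G' c) :
    Nat.card G'.ConnectedComponent ≤ Nat.card ((⋃ i, S i)ᶜ : Set V) + k := by
  obtain ⟨hle, hcolorful, hoptimal⟩ := hopt
  have hV : Nat.card V = k * n + Nat.card ((⋃ i, S i)ᶜ : Set V) := by
    rw [← Set.ncard_add_ncard_compl (⋃ i, S i), ← Nat.card_coe_set_eq,
      Set.natCard_iUnion_of_pairwiseDisjoint hdisj]
    simp [hcard]
  have hblocks : k * (n * (n - 1)) ≤ Nat.card (G.induceBlocks S).ReachablePairs := by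
    simpa [hcard] using sum_card_mul_pred_le_card_reachablePairs (G := G.induceBlocks S) hdisj
      fun i _ hu _ hv => reachable_induceBlocks (hconn i).preconnected hu hv
  have hpairs : k * (n * (n - 1)) ≤ Nat.card G'.ReachablePairs := by
    have htc := hoptimal _ induceBlocks_le (colorful_induceBlocks hdisj hcol)
    rw [tcEdges_eq, tcEdges_eq] at htc
    obtain ⟨r, hr⟩ := (Nat.even_mul_pred_self n).mul_left k
    omega
  have hcomp := card_reachablePairs_add_mul_card_le fun K : G'.ConnectedComponent =>
    hmax _ (K.connected_induce_supp_of_le hle) (hcolorful.injOn_supp K)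
  rcases n with _ | n
  · have := Nat.card_le_card_of_surjective _ fun K : G'.ConnectedComponent => K.exists_rep
    omega
  · rw [Nat.add_sub_cancel] at hpairs
    rw [hV] at hcomp
    have : (n + 1) * (k * n + Nat.card G'.ConnectedComponent) ≤
        (n + 1) * (k * (n + 1) + Nat.card ((⋃ i, S i)ᶜ : Set V)) := by linarith
    linarith [Nat.le_of_mul_le_mul_left this n.succ_pos]

/-- Given `k ≥ 2` pairwise disjoint maximum-cardinality colorful components
`S₁, …, S_k` of `G`, each of size `n`, every optimal MEC solution has at most
`|V ∖ (S₁ ∪ ⋯ ∪ S_k)| + k` colorful components. -/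
theorem stmt_5 {V C : Type*} [Fintype V] (G : SimpleGraph V) (c : V → C)
    (k n : ℕ) (hk : 2 ≤ k) (S : Fin k → Set V)
    (hconn : ∀ i, (G.induce (S i)).Connected)
    (hcol : ∀ i, Set.InjOn c (S i))
    (hcard : ∀ i, Nat.card (S i) = n)
    (hmax : ∀ T : Set V, (G.induce T).Connected → Set.InjOn c T →
      Nat.card T ≤ n)
    (hdisj : ∀ i j, i ≠ j → Disjoint (S i) (S j))
    (G' : SimpleGraph V) (hopt : IsMECOptimal G G' c) :
    Nat.card G'.ConnectedComponent ≤ Nat.card ((⋃ i, S i)ᶜ : Set V) + k :=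
  stmt_5_general G c k n S hconn hcol hcard hmax hdisj G' hopt
end

section
/- If S is a maximum-cardinality colorful component of a node-colored graph G, then in any optimal solution of the MEC problem, the number of non-removed edges is at least |S| − 1. -/
open Finset

namespace SimpleGraph

variable {V : Type*} (G : SimpleGraph V)

theorem sum_card_edgeSet_toSimpleGraph_le [Finite V] [Fintype G.ConnectedComponent] :
    ∑ c : G.ConnectedComponent, Nat.card c.toSimpleGraph.edgeSet ≤ Nat.card G.edgeSet := by
  rw [← Nat.card_sigma]
  refine Nat.card_le_card_of_injective
    (fun e => ⟨e.2.1.map Subtype.val, ?_⟩) ?_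
  · obtain ⟨c, ⟨e, he⟩⟩ := e
    induction e using Sym2.ind with
    | _ x y => exact (c.toSimpleGraph_hom.map_adj he : _)
  · rintro ⟨c₁, ⟨e₁, he₁⟩⟩ ⟨c₂, ⟨e₂, he₂⟩⟩ h
    simp only [Subtype.mk.injEq] at h
    obtain ⟨x, hx⟩ : ∃ x : c₁.supp, x ∈ e₁ := e₁.ind (fun x _ => ⟨x, Sym2.mem_mk_left _ _⟩)
    have hx₂ : x.val ∈ e₂.map Subtype.val := h ▸ Sym2.mem_map.mpr ⟨x, hx, rfl⟩
    obtain ⟨y, -, hy⟩ := Sym2.mem_map.mp hx₂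
    obtain rfl : c₁ = c₂ := ConnectedComponent.eq_of_common_vertex x.2 (hy ▸ y.2)
    obtain rfl : e₁ = e₂ := Sym2.map.injective Subtype.val_injective h
    rfl

theorem sum_card_supp_sub_one_le_card_edgeSet [Finite V] [Fintype G.ConnectedComponent] :
    ∑ c : G.ConnectedComponent, (Nat.card c.supp - 1) ≤ Nat.card G.edgeSet :=
  calc ∑ c : G.ConnectedComponent, (Nat.card c.supp - 1)
      ≤ ∑ c : G.ConnectedComponent, Nat.card c.toSimpleGraph.edgeSet :=
        Finset.sum_le_sum fun c _ =>
          Nat.sub_le_of_le_add c.connected_toSimpleGraph.card_vert_le_card_edgeSet_add_one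
    _ ≤ Nat.card G.edgeSet := G.sum_card_edgeSet_toSimpleGraph_le

theorem card_reachable_offDiag_eq_sum [Fintype V] [Fintype G.ConnectedComponent] :
    Nat.card {p : V × V // p.1 ≠ p.2 ∧ G.Reachable p.1 p.2} =
      ∑ c : G.ConnectedComponent, Nat.card c.supp * (Nat.card c.supp - 1) := by
  classical
  have hfiber (c : G.ConnectedComponent) :
      {p ∈ (univ : Finset (V × V)) | (p.1 ≠ p.2 ∧ G.Reachable p.1 p.2) ∧
        G.connectedComponentMk p.1 = c} = c.supp.toFinset.offDiag := by
    ext ⟨x, y⟩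
    simp only [mem_filter, mem_univ, true_and, mem_offDiag, Set.mem_toFinset,
      ConnectedComponent.mem_supp_iff]
    constructor
    · rintro ⟨⟨hne, hxy⟩, rfl⟩
      exact ⟨rfl, (ConnectedComponent.sound hxy).symm, hne⟩
    · rintro ⟨rfl, hy, hne⟩
      exact ⟨⟨hne, ConnectedComponent.exact hy.symm⟩, rfl⟩
  rw [Nat.card_eq_fintype_card, Fintype.card_subtype,
    card_eq_sum_card_fiberwise (f := fun p => G.connectedComponentMk p.1) (t := univ)
      (fun _ _ => mem_univ _)]
  refine Finset.sum_congr rfl fun c _ => ?_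
  rw [filter_filter, hfiber, offDiag_card, ← Nat.mul_sub_one,
    Nat.card_eq_card_toFinset]

theorem card_reachable_offDiag_le_mul_card_edgeSet [Finite V] {n : ℕ}
    (hn : ∀ c : G.ConnectedComponent, Nat.card c.supp ≤ n) :
    Nat.card {p : V × V // p.1 ≠ p.2 ∧ G.Reachable p.1 p.2} ≤ n * Nat.card G.edgeSet := by
  classical
  have := Fintype.ofFinite V
  calc Nat.card {p : V × V // p.1 ≠ p.2 ∧ G.Reachable p.1 p.2}
      = ∑ c : G.ConnectedComponent, Nat.card c.supp * (Nat.card c.supp - 1) :=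
        G.card_reachable_offDiag_eq_sum
    _ ≤ ∑ c : G.ConnectedComponent, n * (Nat.card c.supp - 1) :=
        Finset.sum_le_sum fun c _ => Nat.mul_le_mul_right _ (hn c)
    _ = n * ∑ c : G.ConnectedComponent, (Nat.card c.supp - 1) := (Finset.mul_sum ..).symm
    _ ≤ n * Nat.card G.edgeSet := Nat.mul_le_mul_left n G.sum_card_supp_sub_one_le_card_edgeSet

theorem card_mul_sub_one_le_card_reachable_offDiag [Finite V] {S : Set V}
    (hS : ∀ x ∈ S, ∀ y ∈ S, G.Reachable x y) :
    Nat.card S * (Nat.card S - 1) ≤ Nat.card {p : V × V // p.1 ≠ p.2 ∧ G.Reachable p.1 p.2} := by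
  classical
  have := Fintype.ofFinite V
  rw [Nat.card_eq_card_toFinset, Nat.mul_sub_one, ← offDiag_card, Nat.card_eq_fintype_card,
    Fintype.card_subtype]
  refine card_le_card fun p hp => ?_
  rw [mem_offDiag, Set.mem_toFinset, Set.mem_toFinset] at hp
  exact mem_filter.mpr ⟨mem_univ _, hp.2.2, hS _ hp.1 _ hp.2.1⟩

end SimpleGraph

open SimpleGraph

section Colorful

variable {V C : Type*} {G H : SimpleGraph V} {c : V → C}

theorem Colorful.injOn_supp (hH : Colorful H c) (K : H.ConnectedComponent) :
    Set.InjOn c K.supp := fun _ hx _ hy hxy =>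
  hH _ _ (K.reachable_of_mem_supp hx hy) hxy

theorem SimpleGraph.ConnectedComponent.connected_induce_supp_of_le_s6 (hle : H ≤ G)
    (K : H.ConnectedComponent) : (G.induce K.supp).Connected :=
  K.connected_toSimpleGraph.mono (comap_monotone _ hle)

theorem colorful_spanningCoe_induce {S : Set V} (hS : Set.InjOn c S) :
    Colorful (G.induce S).spanningCoe c := by
  have hsupp : (G.induce S).spanningCoe.support ⊆ S := by
    rintro _ ⟨_, -, x, _, -, rfl, -⟩
    exact x.2
  intro u v huv hcuv
  by_contra hne
  exact hne (hS (hsupp (mem_support_of_reachable hne huv))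
    (hsupp (mem_support_of_reachable (Ne.symm hne) huv.symm)) hcuv)

end Colorful

theorem IsMECOptimal.card_mul_sub_one_le_card_reachable_offDiag {V C : Type*} [Finite V]
    {G G' H : SimpleGraph V} {c : V → C} (hopt : IsMECOptimal G G' c) (hle : H ≤ G)
    (hH : Colorful H c) {S : Set V} (hS : ∀ x ∈ S, ∀ y ∈ S, H.Reachable x y) :
    Nat.card S * (Nat.card S - 1) ≤
      Nat.card {p : V × V // p.1 ≠ p.2 ∧ G'.Reachable p.1 p.2} := by
  have hHS := H.card_mul_sub_one_le_card_reachable_offDiag hS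
  have hG' : tcEdges H ≤ tcEdges G' := hopt.2.2 H hle hH
  -- `tcEdges` halves the pair count, which loses nothing on the even number `n * (n - 1)`.
  obtain ⟨k, hk⟩ := Nat.even_mul_pred_self (Nat.card S)
  unfold tcEdges at hG'
  omega

/-- If `S` is a maximum-cardinality colorful component of `G`, then any
optimal MEC solution keeps at least `|S| − 1` edges. -/
theorem stmt_6 {V C : Type*} [Fintype V] (G : SimpleGraph V) (c : V → C)
    (S : Set V) (hconn : (G.induce S).Connected) (hcolS : Set.InjOn c S)
    (hmax : ∀ T : Set V, (G.induce T).Connected → Set.InjOn c T →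
      Nat.card T ≤ Nat.card S)
    (G' : SimpleGraph V) (hopt : IsMECOptimal G G' c) :
    Nat.card S - 1 ≤ Nat.card G'.edgeSet := by
  have hreach : ∀ x ∈ S, ∀ y ∈ S, (G.induce S).spanningCoe.Reachable x y := fun x hx y hy =>
    (hconn.preconnected ⟨x, hx⟩ ⟨y, hy⟩).map (Embedding.map _ _).toHom
  have hlower := hopt.card_mul_sub_one_le_card_reachable_offDiag (spanningCoe_induce_le G S)
    (colorful_spanningCoe_induce hcolS) hreach
  have hupper := G'.card_reachable_offDiag_le_mul_card_edgeSet fun K =>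
    hmax _ (K.connected_induce_supp_of_le_s6 hopt.1) (hopt.2.1.injOn_supp K)
  rcases Nat.eq_zero_or_pos (Nat.card S) with hS | hS
  · simp [hS]
  · exact Nat.le_of_mul_le_mul_left (hlower.trans hupper) hS
end

section
/- For natural numbers n₁ ≥ n₂ ≥ ... ≥ n_k with each nᵢ ≤ n and Σ nᵢ = N, the sum Σ nᵢ(nᵢ−1)/2 is at most achieved by taking ⌊N/n⌋ components of size n and one of size N mod n; formally Σ nᵢ(nᵢ−1)/2 ≤ ⌊N/n⌋·n(n−1)/2 + r(r−1)/2 where r = N mod n. -/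
/-! Split the total as `s = n * (s / n) + s % n`. Adding one more part `m ≤ n` to a configuration
of full parts plus a remainder `r < n` either merges `m` into the remainder, which only helps since
`(r + m).choose 2 = r.choose 2 + r * m + m.choose 2`, or overflows into a new full part, and then
`m.choose 2 + r.choose 2 ≤ n.choose 2 + (r + m - n).choose 2` because moving mass from the smaller
of two parts to the larger increases the sum of `choose 2` (convexity). Induction over the parts
finishes the proof. -/

namespace Nat

theorem add_choose_two_s15 (a b : ℕ) : (a + b).choose 2 = a.choose 2 + a * b + b.choose 2 := by
  rw [add_choose_eq]
  simp [Finset.Nat.antidiagonal_succ, add_comm]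

theorem choose_two_add_choose_two_le (a b : ℕ) : a.choose 2 + b.choose 2 ≤ (a + b).choose 2 := by
  rw [add_choose_two_s15]
  omega

theorem choose_two_add_choose_two_le_of_le_add {a b n : ℕ} (ha : a ≤ n) (hb : b ≤ n)
    (hab : n ≤ a + b) : a.choose 2 + b.choose 2 ≤ n.choose 2 + (a + b - n).choose 2 := by
  obtain ⟨d, rfl⟩ := Nat.exists_eq_add_of_le ha
  obtain ⟨c, rfl⟩ : ∃ c, b = d + c := ⟨b - d, by omega⟩
  rw [show a + (d + c) - (a + d) = c by omega, add_choose_two_s15, add_choose_two_s15]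
  have : d * c ≤ a * d := by
    rw [mul_comm a]
    exact Nat.mul_le_mul_left d (by omega)
  omega

end Nat

def extremalEdges (n s : ℕ) : ℕ := s / n * n.choose 2 + (s % n).choose 2

theorem extremalEdges_mul_add {n : ℕ} (hn : 0 < n) (q x : ℕ) :
    extremalEdges n (n * q + x) = q * n.choose 2 + extremalEdges n x := by
  simp only [extremalEdges, Nat.mul_add_div hn, Nat.mul_add_mod, add_mul]
  ring

theorem choose_two_add_extremalEdges_le {n m : ℕ} (hm : m ≤ n) (s : ℕ) :
    m.choose 2 + extremalEdges n s ≤ extremalEdges n (s + m) := by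
  rcases Nat.eq_zero_or_pos n with rfl | hn
  · simp [Nat.le_zero.mp hm]
  have hs := Nat.div_add_mod s n
  have hr := Nat.mod_lt s hn
  set r := s % n
  rw [← hs, add_assoc, extremalEdges_mul_add hn, extremalEdges_mul_add hn, extremalEdges,
    Nat.div_eq_of_lt hr, zero_mul, zero_add, Nat.mod_eq_of_lt hr]
  suffices m.choose 2 + r.choose 2 ≤ extremalEdges n (r + m) by omega
  rcases lt_or_ge (r + m) n with hlt | hge
  · rw [extremalEdges, Nat.div_eq_of_lt hlt, Nat.mod_eq_of_lt hlt, zero_mul, zero_add, add_comm]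
    exact Nat.choose_two_add_choose_two_le r m
  · have hsplit : r + m = n * 1 + (r + m - n) := by omega
    rw [hsplit, extremalEdges_mul_add hn, one_mul, extremalEdges, Nat.div_eq_of_lt (by omega),
      Nat.mod_eq_of_lt (by omega), zero_mul, zero_add, add_comm (m.choose 2)]
    exact Nat.choose_two_add_choose_two_le_of_le_add hr.le hm hge

theorem sum_map_choose_two_le_extremalEdges {n : ℕ} (l : List ℕ) (hle : ∀ x ∈ l, x ≤ n) :
    (l.map (·.choose 2)).sum ≤ extremalEdges n l.sum := by
  induction l with
  | nil => simp [extremalEdges]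
  | cons m t ih =>
    rw [List.map_cons, List.sum_cons, List.sum_cons, add_comm m]
    calc m.choose 2 + (t.map (·.choose 2)).sum
        ≤ m.choose 2 + extremalEdges n t.sum :=
          Nat.add_le_add_left (ih fun x hx => hle x (List.mem_cons_of_mem m hx)) _
      _ ≤ extremalEdges n (t.sum + m) :=
          choose_two_add_extremalEdges_le (hle m List.mem_cons_self) _

theorem stmt_15_general (n : ℕ) (l : List ℕ) (hle : ∀ x ∈ l, x ≤ n) :
    (l.map (fun m => m * (m - 1) / 2)).sum
      ≤ (l.sum / n) * (n * (n - 1) / 2) + (l.sum % n) * (l.sum % n - 1) / 2 := by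
  simp_rw [← Nat.choose_two_right]
  exact sum_map_choose_two_le_extremalEdges l hle

/-- For component sizes `n₁ ≥ n₂ ≥ ⋯ ≥ n_k`, each at most `n`, summing to `N`,
the total clique edge count `Σ nᵢ(nᵢ−1)/2` is at most
`⌊N/n⌋·n(n−1)/2 + r(r−1)/2` where `r = N mod n`. -/
theorem stmt_15 (n : ℕ) (l : List ℕ) (hsort : l.Pairwise (· ≥ ·))
    (hle : ∀ x ∈ l, x ≤ n) :
    (l.map (fun m => m * (m - 1) / 2)).sum
      ≤ (l.sum / n) * (n * (n - 1) / 2) + (l.sum % n) * (l.sum % n - 1) / 2 :=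
  stmt_15_general n l hle
end

section
/- Let G be a node-colored graph, B a minimal edge cut of G with |B| = t splitting G into connected components G_B and G∖G_B, such that G_B is colorful, t-edge-connected, and contains all colors of the nodes in H = {v ∈ G∖G_B : ∃u ∈ G_B with {u,v} ∈ B}. Then any feasible MOP solution must remove at least t edges among those incident to G_B across any separation of G_B, so removing exactly B and keeping G_B intact is optimal restricted to those edges; i.e., there exists an optimal MOP solution containing all edges of B in the removed set. -/
/-- An optimal solution of the MOP problem: a colorful spanning subgraph of
`G` keeping the maximum number of edges. -/
def IsMOPOptimal {V C : Type*} (G G' : SimpleGraph V) (c : V → C) : Prop :=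
  G' ≤ G ∧ Colorful G' c ∧
    ∀ H : SimpleGraph V, H ≤ G → Colorful H c →
      Nat.card H.edgeSet ≤ Nat.card G'.edgeSet

/-!
Take an optimal solution `G₀` and replace everything it keeps inside `S` or across the cut by all
edges of `G[S]`. The result is colorful, since `c` is injective on `S` and no edge leaves `S`. It is
no smaller: if `G₀` keeps a cut edge `uv` with `u ∈ S`, some `w ∈ S` has the colour of `v`, so `w`
lies outside the `G₀`-component `A` of `u` in `S`. As `G[S]` is `t`-edge-connected, at least `t`
edges of `G[S]` leave `A`, all of them missing from `G₀`, while `G₀` keeps at most `t` cut edges.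
-/

open Set

namespace SimpleGraph

variable {V C : Type*}

def edgeBoundary (G : SimpleGraph V) (A : Set V) : Set (Sym2 V) :=
  {e | e ∈ G.edgeSet ∧ (∃ u ∈ A, u ∈ e) ∧ ∃ v ∈ Aᶜ, v ∈ e}

lemma mk_mem_edgeBoundary {G : SimpleGraph V} {A : Set V} {u v : V} :
    s(u, v) ∈ G.edgeBoundary A ↔ G.Adj u v ∧ (u ∈ A ∧ v ∉ A ∨ v ∈ A ∧ u ∉ A) := by
  simp only [edgeBoundary, mem_ofPred_eq, mem_edgeSet, Sym2.mem_iff, mem_compl_iff]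
  grind

lemma edgeBoundary_mono {G H : SimpleGraph V} (h : H ≤ G) (A : Set V) :
    H.edgeBoundary A ⊆ G.edgeBoundary A :=
  fun _ ⟨he, hA⟩ => ⟨edgeSet_mono h he, hA⟩

lemma edgeBoundary_eq_setOf_exists (G : SimpleGraph V) (A : Set V) :
    G.edgeBoundary A = {e | e ∈ G.edgeSet ∧ ∃ u v, e = s(u, v) ∧ u ∈ A ∧ v ∉ A} := by
  ext e
  induction e using Sym2.ind with
  | _ a b =>
    simp only [mk_mem_edgeBoundary, mem_ofPred_eq, mem_edgeSet, Sym2.eq_iff]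
    grind

lemma disjoint_edgeBoundary_edgeSet {G H : SimpleGraph V} {A : Set V}
    (hA : ∀ a b, a ∈ A → H.Adj a b → b ∈ A) : Disjoint (G.edgeBoundary A) H.edgeSet := by
  rw [Set.disjoint_left]
  intro e he
  induction e using Sym2.ind with
  | _ a b =>
    rw [mk_mem_edgeBoundary] at he
    rcases he with ⟨-, ⟨ha, hb⟩ | ⟨hb, ha⟩⟩ <;> intro h
    exacts [hb (hA a b ha h), ha (hA b a hb h.symm)]

lemma ncard_edgeSet_induce [Finite V] (G : SimpleGraph V) (S : Set V) :
    (G.induce S).edgeSet.ncard = (G.edgeSet ∩ S.sym2).ncard := by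
  rw [← ncard_image_of_injective _ (Sym2.map.injective Subtype.val_injective)]
  congr 1
  ext e
  constructor
  · rintro ⟨e', he', rfl⟩
    induction e' using Sym2.ind with
    | _ x y => exact ⟨he', x.2, y.2⟩
  · induction e using Sym2.ind with
    | _ a b => exact fun ⟨h, ha, hb⟩ => ⟨s(⟨a, ha⟩, ⟨b, hb⟩), h, rfl⟩

lemma disjoint_sym2_compl (S : Set V) : Disjoint S.sym2 Sᶜ.sym2 := by
  rw [disjoint_iff_inter_eq_empty, ← sym2_inter, inter_compl_self, sym2_empty]

lemma edgeSet_eq_union_edgeBoundary_union (H : SimpleGraph V) (S : Set V) :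
    H.edgeSet = H.edgeSet ∩ S.sym2 ∪ H.edgeBoundary S ∪ H.edgeSet ∩ Sᶜ.sym2 := by
  ext e
  induction e using Sym2.ind with
  | _ a b =>
    simp only [mem_union, mem_inter_iff, mem_edgeSet, mk_mem_edgeBoundary, mk_mem_sym2_iff,
      mem_compl_iff]
    tauto

lemma ncard_edgeSet_eq_add [Finite V] (H : SimpleGraph V) (S : Set V) :
    H.edgeSet.ncard =
      (H.edgeSet ∩ S.sym2).ncard + (H.edgeBoundary S).ncard + (H.edgeSet ∩ Sᶜ.sym2).ncard := by
  have hdisj₁ : Disjoint (H.edgeSet ∩ S.sym2) (H.edgeBoundary S) := by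
    refine Set.disjoint_left.mpr fun e he hb => ?_
    induction e using Sym2.ind with
    | _ a b =>
      simp only [mem_inter_iff, mk_mem_sym2_iff, mk_mem_edgeBoundary] at he hb
      tauto
  have hdisj₂ : Disjoint (H.edgeSet ∩ S.sym2 ∪ H.edgeBoundary S) (H.edgeSet ∩ Sᶜ.sym2) := by
    refine Set.disjoint_left.mpr fun e he hc => ?_
    induction e using Sym2.ind with
    | _ a b =>
      simp only [mem_union, mem_inter_iff, mk_mem_sym2_iff, mk_mem_edgeBoundary,
        mem_compl_iff] at he hc
      tauto
  nth_rw 1 [edgeSet_eq_union_edgeBoundary_union H S]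
  rw [ncard_union_eq hdisj₂, ncard_union_eq hdisj₁]

def piecewise (S : Set V) (G H : SimpleGraph V) : SimpleGraph V where
  Adj a b := G.Adj a b ∧ a ∈ S ∧ b ∈ S ∨ H.Adj a b ∧ a ∉ S ∧ b ∉ S
  symm := ⟨fun _ _ =>
    Or.imp (fun ⟨h, ha, hb⟩ => ⟨h.symm, hb, ha⟩) fun ⟨h, ha, hb⟩ => ⟨h.symm, hb, ha⟩⟩

section piecewise

variable {S : Set V} {G H : SimpleGraph V}

lemma piecewise_le {K : SimpleGraph V} (hG : G ≤ K) (hH : H ≤ K) : piecewise S G H ≤ K := by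
  rintro a b (⟨h, -⟩ | ⟨h, -⟩)
  exacts [hG h, hH h]

lemma edgeSet_piecewise :
    (piecewise S G H).edgeSet = G.edgeSet ∩ S.sym2 ∪ H.edgeSet ∩ Sᶜ.sym2 := by
  ext e
  induction e using Sym2.ind with
  | _ a b => rfl

lemma ncard_edgeSet_piecewise [Finite V] :
    (piecewise S G H).edgeSet.ncard = (G.edgeSet ∩ S.sym2).ncard + (H.edgeSet ∩ Sᶜ.sym2).ncard := by
  rw [edgeSet_piecewise, ncard_union_eq
    ((disjoint_sym2_compl S).mono inter_subset_right inter_subset_right)]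

lemma reachable_piecewise_cases {u v : V} (h : (piecewise S G H).Reachable u v) :
    u ∈ S ∧ v ∈ S ∨ u ∉ S ∧ v ∉ S ∧ H.Reachable u v := by
  obtain ⟨w⟩ := h
  induction w with
  | @nil u => by_cases hu : u ∈ S <;> simp [hu]
  | cons hadj _ ih =>
    rcases hadj with ⟨-, ha, hx⟩ | ⟨hadj, ha, hx⟩ <;> rcases ih with ⟨hx', hb⟩ | ⟨hx', hb, hr⟩
    · exact .inl ⟨ha, hb⟩
    · exact absurd hx hx'
    · exact absurd hx' hx
    · exact .inr ⟨ha, hb, hadj.reachable.trans hr⟩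

lemma colorful_piecewise {c : V → C} (hS : InjOn c S) (hH : Colorful H c) :
    Colorful (piecewise S G H) c := by
  intro u v huv hc
  rcases reachable_piecewise_cases huv with ⟨hu, hv⟩ | ⟨-, -, hr⟩
  exacts [hS hu hv hc, hH u v hr hc]

end piecewise

section cut

variable {G H : SimpleGraph V} {c : V → C} {S : Set V}

lemma exists_closed_proper_subset_of_edgeBoundary_nonempty (hHG : H ≤ G) (hH : Colorful H c)
    (hcolors : ∀ v ∉ S, (∃ u ∈ S, G.Adj u v) → ∃ u ∈ S, c u = c v)
    (hcross : (H.edgeBoundary S).Nonempty) :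
    ∃ A : Set S, A.Nonempty ∧ A ≠ univ ∧ ∀ a b, a ∈ A → (H.induce S).Adj a b → b ∈ A := by
  rw [edgeBoundary_eq_setOf_exists] at hcross
  obtain ⟨_, huv, u, v, rfl, hu, hv⟩ := hcross
  obtain ⟨w, hw, hcw⟩ := hcolors v hv ⟨u, hu, hHG huv⟩
  refine ⟨{y | H.Reachable u y}, ⟨⟨u, hu⟩, .rfl⟩, fun hA => ?_,
    fun a b ha hab => ha.trans (show H.Adj a b from hab).reachable⟩
  have huw : H.Reachable u w := (hA ▸ mem_univ (⟨w, hw⟩ : S) :)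
  exact hv (hH v w (huv.symm.reachable.trans huw) hcw.symm ▸ hw)

lemma ncard_edgeSet_inter_sym2_add_ncard_edgeBoundary_le [Finite V] (hHG : H ≤ G)
    (hH : Colorful H c)
    (htconn : ∀ A : Set S, A.Nonempty → A ≠ univ →
      (G.edgeBoundary S).ncard ≤ ((G.induce S).edgeBoundary A).ncard)
    (hcolors : ∀ v ∉ S, (∃ u ∈ S, G.Adj u v) → ∃ u ∈ S, c u = c v) :
    (H.edgeSet ∩ S.sym2).ncard + (H.edgeBoundary S).ncard ≤ (G.edgeSet ∩ S.sym2).ncard := by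
  rcases (H.edgeBoundary S).eq_empty_or_nonempty with hempty | hcross
  · rw [hempty, ncard_empty, add_zero]
    exact ncard_le_ncard (inter_subset_inter_left _ (edgeSet_mono hHG))
  obtain ⟨A, hAne, hAuniv, hA⟩ :=
    exists_closed_proper_subset_of_edgeBoundary_nonempty hHG hH hcolors hcross
  rw [← ncard_edgeSet_induce, ← ncard_edgeSet_induce]
  calc (H.induce S).edgeSet.ncard + (H.edgeBoundary S).ncard
      ≤ (H.induce S).edgeSet.ncard + ((G.induce S).edgeBoundary A).ncard := by
        gcongr
        exact (ncard_le_ncard (edgeBoundary_mono hHG S)).trans (htconn A hAne hAuniv)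
    _ = ((H.induce S).edgeSet ∪ (G.induce S).edgeBoundary A).ncard :=
        (ncard_union_eq (disjoint_edgeBoundary_edgeSet hA).symm).symm
    _ ≤ (G.induce S).edgeSet.ncard :=
        ncard_le_ncard (union_subset (edgeSet_mono fun _ _ h => hHG h) fun _ he => he.1)

end cut

end SimpleGraph

lemma colorful_bot {V C : Type*} (c : V → C) : Colorful (⊥ : SimpleGraph V) c :=
  fun _ _ h _ => SimpleGraph.reachable_bot.mp h

lemma exists_isMOPOptimal {V C : Type*} [Finite V] (G : SimpleGraph V) (c : V → C) :
    ∃ G', IsMOPOptimal G G' c := by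
  have : Nonempty {H : SimpleGraph V // H ≤ G ∧ Colorful H c} := ⟨⟨⊥, bot_le, colorful_bot c⟩⟩
  obtain ⟨⟨G₀, hle, hcol⟩, hmax⟩ :=
    Finite.exists_max fun H : {H : SimpleGraph V // H ≤ G ∧ Colorful H c} => Nat.card H.1.edgeSet
  exact ⟨G₀, hle, hcol, fun H h₁ h₂ => hmax ⟨H, h₁, h₂⟩⟩

lemma IsMOPOptimal.of_card_le {V C : Type*} {G G₀ G' : SimpleGraph V} {c : V → C}
    (h₀ : IsMOPOptimal G G₀ c) (hle : G' ≤ G) (hcol : Colorful G' c)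
    (hcard : Nat.card G₀.edgeSet ≤ Nat.card G'.edgeSet) : IsMOPOptimal G G' c :=
  ⟨hle, hcol, fun H h₁ h₂ => (h₀.2.2 H h₁ h₂).trans hcard⟩

theorem stmt_17_general {V C : Type*} [Fintype V] (G : SimpleGraph V) (c : V → C)
    (S : Set V)
    (t : ℕ)
    (ht : t = Nat.card {e : Sym2 V // e ∈ G.edgeSet ∧
      ∃ u v : V, e = s(u, v) ∧ u ∈ S ∧ v ∉ S})
    (hcolS : Set.InjOn c S)
    (htconn : ∀ A : Set S, A.Nonempty → A ≠ Set.univ →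
      t ≤ Nat.card {e : Sym2 S // e ∈ (G.induce S).edgeSet ∧
        (∃ u ∈ A, u ∈ e) ∧ ∃ v ∈ Aᶜ, v ∈ e})
    (hcolors : ∀ v ∉ S, (∃ u ∈ S, G.Adj u v) → ∃ u ∈ S, c u = c v) :
    ∃ G' : SimpleGraph V, IsMOPOptimal G G' c ∧
      ∀ u v : V, u ∈ S → v ∉ S → ¬ G'.Adj u v := by
  obtain ⟨G₀, hG₀⟩ := exists_isMOPOptimal G c
  have ht' : t = (G.edgeBoundary S).ncard := by
    rw [ht, SimpleGraph.edgeBoundary_eq_setOf_exists, ← Nat.card_coe_set_eq]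
    rfl
  have hcount := SimpleGraph.ncard_edgeSet_inter_sym2_add_ncard_edgeBoundary_le hG₀.1 hG₀.2.1
    (fun A hA hA' => ht' ▸ (htconn A hA hA').trans_eq (Nat.card_coe_set_eq _)) hcolors
  refine ⟨.piecewise S G G₀, hG₀.of_card_le (SimpleGraph.piecewise_le le_rfl hG₀.1)
    (SimpleGraph.colorful_piecewise hcolS hG₀.2.1) ?_, ?_⟩
  · rw [Nat.card_coe_set_eq, Nat.card_coe_set_eq, G₀.ncard_edgeSet_eq_add S,
      SimpleGraph.ncard_edgeSet_piecewise]
    omega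
  · rintro u v hu hv (⟨-, -, hv'⟩ | ⟨-, hu', -⟩)
    exacts [hv hv', hu' hu]

/-- Let `B` be a minimal edge cut of `G` (the set of edges between `S` and its
complement, both inducing connected subgraphs), with `|B| = t`. If `G[S]` is
colorful, `t`-edge-connected, and contains all colors of the nodes of the
complement incident to `B`, then there exists an optimal MOP solution in
which all the edges of `B` are removed. -/
theorem stmt_17 {V C : Type*} [Fintype V] (G : SimpleGraph V) (c : V → C)
    (S : Set V) (hS : S.Nonempty) (hSc : Sᶜ.Nonempty)
    (hconnS : (G.induce S).Connected) (hconnSc : (G.induce Sᶜ).Connected)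
    (t : ℕ)
    (ht : t = Nat.card {e : Sym2 V // e ∈ G.edgeSet ∧
      ∃ u v : V, e = s(u, v) ∧ u ∈ S ∧ v ∉ S})
    (hcolS : Set.InjOn c S)
    (htconn : ∀ A : Set S, A.Nonempty → A ≠ Set.univ →
      t ≤ Nat.card {e : Sym2 S // e ∈ (G.induce S).edgeSet ∧
        (∃ u ∈ A, u ∈ e) ∧ ∃ v ∈ Aᶜ, v ∈ e})
    (hcolors : ∀ v ∉ S, (∃ u ∈ S, G.Adj u v) → ∃ u ∈ S, c u = c v) :
    ∃ G' : SimpleGraph V, IsMOPOptimal G G' c ∧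
      ∀ u v : V, u ∈ S → v ∉ S → ¬ G'.Adj u v :=
  stmt_17_general G c S t ht hcolS htconn hcolors
end
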